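/- arXiv:1008.3204 — 7 statements merged into one kernel-verified Lean document; each statement's English description precedes it below -/
import Mathlib

section
/- If two finite sets of indices, each consisting of positive integers no two of which are consecutive, give the same sum of Fibonacci numbers, then the two sets are equal. Precisely: if S and T are finite sets of positive integers such that no two elements of S are consecutive integers, no two elements of T are consecutive integers, and ∑_{i∈S} F_i = ∑_{i∈T} F_i, then S = T. -/
/-- `F n` is the `n`-th Fibonacci number in the paper's indexing:
`F 1 = 1, F 2 = 2, F 3 = 3, F 4 = 5`, i.e. `F n = fib (n+1)`. -/
def F (n : ℕ) : ℕ := Nat.fib (n + 1)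

lemma F_pos (n : ℕ) : 0 < F n := Nat.fib_pos.mpr (Nat.succ_pos n)

lemma F_mono : Monotone F := fun a b h => Nat.fib_mono (Nat.add_le_add_right h 1)

lemma F_add (n : ℕ) (hn : 1 ≤ n) : F (n + 1) = F n + F (n - 1) := by
  obtain ⟨m, rfl⟩ := Nat.exists_eq_add_of_le hn
  simp only [F, Nat.add_sub_cancel_left]
  rw [show 1 + m + 1 + 1 = (1 + m) + 2 by ring, Nat.fib_add_two]
  ring_nf

lemma sum_F_lt (n : ℕ) : ∀ (S : Finset ℕ), (∀ i ∈ S, 0 < i) → (∀ i ∈ S, i + 1 ∉ S) →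
    (∀ i ∈ S, i ≤ n) → ∑ i ∈ S, F i < F (n + 1) := by
  induction n using Nat.strong_induction_on with
  | _ n ih =>
    intro S hpos hnc hle
    by_cases hn : n ∈ S
    · have hn1 : 1 ≤ n := hpos n hn
      have hrec : ∑ i ∈ S.erase n, F i < F (n - 1) := by
        rcases Nat.lt_or_ge n 2 with h2 | h2
        · -- n = 1, erase has elements positive ≤ 1 but ≠ 1, so empty
          interval_cases n
          have : S.erase 1 = ∅ := by
            ext i; simp only [Finset.mem_erase, Finset.notMem_empty, iff_false]
            rintro ⟨hne, hi⟩
            exact hne (le_antisymm (hle i hi) (hpos i hi))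
          simp [this, F]
        · have hb : ∀ i ∈ S.erase n, i ≤ n - 2 := by
            intro i hi
            rw [Finset.mem_erase] at hi
            obtain ⟨hne, hiS⟩ := hi
            have h1 : i ≤ n := hle i hiS
            have h2' : i ≠ n - 1 := by
              intro h
              apply hnc i hiS
              rw [h, Nat.sub_add_cancel hn1]
              exact hn
            omega
          have := ih (n - 2) (by omega) (S.erase n)
            (fun i hi => hpos i (Finset.mem_of_mem_erase hi))
            (fun i hi => by
              intro hc
              exact hnc i (Finset.mem_of_mem_erase hi) (Finset.mem_of_mem_erase hc)) hb
          have heq : n - 2 + 1 = n - 1 := by omega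
          rwa [heq] at this
      calc ∑ i ∈ S, F i = F n + ∑ i ∈ S.erase n, F i := (Finset.add_sum_erase _ _ hn).symm
        _ < F n + F (n - 1) := by omega
        _ = F (n + 1) := (F_add n hn1).symm
    · rcases Nat.eq_zero_or_pos n with rfl | hn1
      · have : S = ∅ := by
          ext i; simp only [Finset.notMem_empty, iff_false]
          intro hi; exact absurd (hle i hi) (by have := hpos i hi; omega)
        simp [this, F]
      · have hb : ∀ i ∈ S, i ≤ n - 1 := by
          intro i hi
          have := hle i hi
          have : i ≠ n := fun h => hn (h ▸ hi)
          omega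
        have := ih (n - 1) (by omega) S hpos hnc hb
        have heq : n - 1 + 1 = n := by omega
        rw [heq] at this
        exact lt_of_lt_of_le this (F_mono (by omega))

lemma zeck_aux : ∀ (N : ℕ) (S T : Finset ℕ),
    (∀ i ∈ S, 0 < i) → (∀ i ∈ T, 0 < i) →
    (∀ i ∈ S, i + 1 ∉ S) → (∀ i ∈ T, i + 1 ∉ T) →
    ∑ i ∈ S, F i = N → ∑ i ∈ T, F i = N → S = T := by
  intro N
  induction N using Nat.strong_induction_on with
  | _ N ih =>
    intro S T hSpos hTpos hSnc hTnc hS hT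
    rcases Nat.eq_zero_or_pos N with rfl | hN
    · have hSe : S = ∅ := by
        by_contra h
        obtain ⟨i, hi⟩ := Finset.nonempty_of_ne_empty h
        have := Finset.single_le_sum (f := F) (fun j _ => Nat.zero_le _) hi
        have := F_pos i
        omega
      have hTe : T = ∅ := by
        by_contra h
        obtain ⟨i, hi⟩ := Finset.nonempty_of_ne_empty h
        have := Finset.single_le_sum (f := F) (fun j _ => Nat.zero_le _) hi
        have := F_pos i
        omega
      rw [hSe, hTe]
    · have hSne : S.Nonempty := by
        by_contra h
        rw [Finset.not_nonempty_iff_eq_empty] at h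
        simp [h] at hS; omega
      have hTne : T.Nonempty := by
        by_contra h
        rw [Finset.not_nonempty_iff_eq_empty] at h
        simp [h] at hT; omega
      set m := (S ∪ T).max' (Finset.Nonempty.inl hSne) with hm
      have hmem : m ∈ S ∪ T := Finset.max'_mem _ _
      have hub : ∀ i ∈ S ∪ T, i ≤ m := fun i hi => Finset.le_max' _ i hi
      -- key: a set not containing m has sum < F m
      have key : ∀ (U : Finset ℕ), (∀ i ∈ U, 0 < i) → (∀ i ∈ U, i + 1 ∉ U) →
          (∀ i ∈ U, i ≤ m) → m ∉ U → 0 < m → ∑ i ∈ U, F i < F m := by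
        intro U hpos hnc hle hnm hm1
        have hb : ∀ i ∈ U, i ≤ m - 1 := by
          intro i hi
          have := hle i hi
          have : i ≠ m := fun h => hnm (h ▸ hi)
          omega
        have := sum_F_lt (m - 1) U hpos hnc hb
        rwa [Nat.sub_add_cancel hm1] at this
      have hmS : m ∈ S := by
        by_contra hns
        have hmT : m ∈ T := by
          rcases Finset.mem_union.mp hmem with h | h
          · exact absurd h hns
          · exact h
        have h1 : ∑ i ∈ S, F i < F m :=
          key S hSpos hSnc (fun i hi => hub i (Finset.mem_union_left _ hi)) hns (hTpos m hmT)
        have h2 : F m ≤ ∑ i ∈ T, F i :=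
          Finset.single_le_sum (fun j _ => Nat.zero_le _) hmT
        omega
      have hmT : m ∈ T := by
        by_contra hnt
        have h1 : ∑ i ∈ T, F i < F m :=
          key T hTpos hTnc (fun i hi => hub i (Finset.mem_union_right _ hi)) hnt (hSpos m hmS)
        have h2 : F m ≤ ∑ i ∈ S, F i :=
          Finset.single_le_sum (fun j _ => Nat.zero_le _) hmS
        omega
      have hSm : ∑ i ∈ S.erase m, F i = N - F m := by
        have := Finset.add_sum_erase _ F hmS
        have hle := Finset.single_le_sum (f := F) (fun j _ => Nat.zero_le _) hmS
        omega
      have hTm : ∑ i ∈ T.erase m, F i = N - F m := by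
        have := Finset.add_sum_erase _ F hmT
        have hle := Finset.single_le_sum (f := F) (fun j _ => Nat.zero_le _) hmT
        omega
      have hlt : N - F m < N := by
        have := F_pos m
        have hle := Finset.single_le_sum (f := F) (fun j _ => Nat.zero_le _) hmS
        omega
      have heq := ih (N - F m) hlt (S.erase m) (T.erase m)
        (fun i hi => hSpos i (Finset.mem_of_mem_erase hi))
        (fun i hi => hTpos i (Finset.mem_of_mem_erase hi))
        (fun i hi hc => hSnc i (Finset.mem_of_mem_erase hi) (Finset.mem_of_mem_erase hc))
        (fun i hi hc => hTnc i (Finset.mem_of_mem_erase hi) (Finset.mem_of_mem_erase hc))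
        hSm hTm
      calc S = insert m (S.erase m) := (Finset.insert_erase hmS).symm
        _ = insert m (T.erase m) := by rw [heq]
        _ = T := Finset.insert_erase hmT

/-- Zeckendorf's theorem (uniqueness): if two finite sets of positive, pairwise
non-consecutive indices give the same sum of Fibonacci numbers, the sets agree. -/
theorem zeckendorf_unique (S T : Finset ℕ)
    (hSpos : ∀ i ∈ S, 0 < i) (hTpos : ∀ i ∈ T, 0 < i)
    (hSnc : ∀ i ∈ S, i + 1 ∉ S) (hTnc : ∀ i ∈ T, i + 1 ∉ T)
    (hsum : ∑ i ∈ S, F i = ∑ i ∈ T, F i) :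
    S = T :=
  zeck_aux (∑ i ∈ T, F i) S T hSpos hTpos hSnc hTnc hsum rfl
end

section
/- For every positive integer n and every k with 0 ≤ 2k ≤ n - 1, the number of integers N in the interval [F_n, F_{n+1}) that admit a representation N = ∑_{i∈S} F_i with S a finite set of positive integers, no two elements of S consecutive integers, and |S| = k + 1, equals C(n-1-k, k). -/
open Finset

/-- Mathlib's Zeckendorf representations are decreasing lists of `fib` indices, and
`F i = fib (i + 1)`. -/
def zeckendorfList (S : Finset ℕ) : List ℕ := (S.map (addRightEmbedding 1)).sort (· ≥ ·)

lemma mem_zeckendorfList {S : Finset ℕ} {a : ℕ} : a ∈ zeckendorfList S ↔ ∃ i ∈ S, i + 1 = a := by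
  simp [zeckendorfList]

lemma isZeckendorfRep_zeckendorfList {S : Finset ℕ} (hpos : ∀ i ∈ S, 0 < i)
    (hS : ∀ i ∈ S, i + 1 ∉ S) : (zeckendorfList S).IsZeckendorfRep := by
  refine List.Pairwise.isChain (List.pairwise_append.2 ⟨?_, List.pairwise_singleton _ _, ?_⟩)
  · refine (sortedGT_sort _).pairwise.imp_of_mem fun ha hb hab => ?_
    obtain ⟨i, hi, rfl⟩ := mem_zeckendorfList.1 ha
    obtain ⟨j, hj, rfl⟩ := mem_zeckendorfList.1 hb
    have : i ≠ j + 1 := fun h => hS j hj (h ▸ hi)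
    omega
  · simp only [List.mem_singleton, forall_eq]
    intro a ha
    obtain ⟨i, hi, rfl⟩ := mem_zeckendorfList.1 ha
    have := hpos i hi
    omega

lemma sum_map_fib_zeckendorfList (S : Finset ℕ) :
    ((zeckendorfList S).map Nat.fib).sum = ∑ i ∈ S, F i := by
  rw [zeckendorfList, ((sort_perm_toList _ _).map _).sum_eq, sum_map_toList, sum_map]
  rfl

lemma zeckendorfList_injective : Function.Injective zeckendorfList := fun S T h =>
  map_injective (addRightEmbedding 1) <| by
    rw [← sort_toFinset (S.map _) (· ≥ ·), ← sort_toFinset (T.map _) (· ≥ ·)]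
    exact congrArg List.toFinset h

lemma sum_F_injOn :
    Set.InjOn (fun S : Finset ℕ => ∑ i ∈ S, F i)
      {S | (∀ i ∈ S, 0 < i) ∧ ∀ i ∈ S, i + 1 ∉ S} := by
  rintro S ⟨hSpos, hS⟩ T ⟨hTpos, hT⟩ hsum
  apply zeckendorfList_injective
  rw [← Nat.zeckendorf_sum_fib (isZeckendorfRep_zeckendorfList hSpos hS),
    ← Nat.zeckendorf_sum_fib (isZeckendorfRep_zeckendorfList hTpos hT),
    sum_map_fib_zeckendorfList, sum_map_fib_zeckendorfList]
  exact congrArg Nat.zeckendorf hsum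

lemma sum_F_lt_F_succ {S : Finset ℕ} {n : ℕ} (hpos : ∀ i ∈ S, 0 < i) (hS : ∀ i ∈ S, i + 1 ∉ S)
    (hle : ∀ i ∈ S, i ≤ n) : ∑ i ∈ S, F i < F (n + 1) := by
  rw [← sum_map_fib_zeckendorfList]
  refine (isZeckendorfRep_zeckendorfList hpos hS).sum_fib_lt fun a ha => ?_
  rcases List.mem_append.1 (List.mem_of_mem_head? ha) with ha | ha
  · obtain ⟨i, hi, rfl⟩ := mem_zeckendorfList.1 ha
    have := hle i hi
    omega
  · rw [List.mem_singleton.1 ha]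
    omega

lemma sum_F_mem_Ico_iff {S : Finset ℕ} {n : ℕ} (hpos : ∀ i ∈ S, 0 < i)
    (hS : ∀ i ∈ S, i + 1 ∉ S) (hne : S.Nonempty) :
    ∑ i ∈ S, F i ∈ Set.Ico (F n) (F (n + 1)) ↔ n ∈ S ∧ ∀ i ∈ S, i ≤ n := by
  rw [Set.mem_Ico]
  have hmax_le : F (S.max' hne) ≤ ∑ i ∈ S, F i :=
    single_le_sum (fun _ _ => Nat.zero_le _) (S.max'_mem hne)
  have hlt_max : ∑ i ∈ S, F i < F (S.max' hne + 1) :=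
    sum_F_lt_F_succ hpos hS fun i hi => S.le_max' i hi
  constructor
  · rintro ⟨hlo, hhi⟩
    have h₁ : n ≤ S.max' hne := by
      by_contra! h
      exact absurd (hlt_max.trans_le (Nat.fib_mono (by omega))) hlo.not_gt
    have h₂ : S.max' hne ≤ n := by
      by_contra! h
      exact absurd (hhi.trans_le (Nat.fib_mono (by omega))) hmax_le.not_gt
    rw [← le_antisymm h₂ h₁]
    exact ⟨S.max'_mem hne, fun i hi => S.le_max' i hi⟩
  · rintro ⟨hn, hle⟩
    exact ⟨single_le_sum (fun _ _ => Nat.zero_le _) hn, sum_F_lt_F_succ hpos hS hle⟩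

def noConsecutiveSubsets (s : Finset ℕ) (k : ℕ) : Finset (Finset ℕ) :=
  {S ∈ s.powersetCard k | ∀ i ∈ S, i + 1 ∉ S}

lemma mem_noConsecutiveSubsets {s S : Finset ℕ} {k : ℕ} :
    S ∈ noConsecutiveSubsets s k ↔ S ⊆ s ∧ S.card = k ∧ ∀ i ∈ S, i + 1 ∉ S := by
  simp [noConsecutiveSubsets, mem_powersetCard, and_assoc]

lemma noConsecutiveSubsets_empty (k : ℕ) :
    noConsecutiveSubsets ∅ k = powersetCard k ∅ :=
  filter_true_of_mem fun S hS => by simp [subset_empty.1 (mem_powersetCard.1 hS).1]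

lemma filter_mem_noConsecutiveSubsets_Ico {n : ℕ} (hn : 0 < n) (k : ℕ) :
    {S ∈ noConsecutiveSubsets (Ico 1 (n + 1)) (k + 1) | n ∈ S} =
      (noConsecutiveSubsets (Ico 1 (n - 1)) k).image (insert n) := by
  ext S
  simp only [mem_filter, mem_image, mem_noConsecutiveSubsets]
  constructor
  · rintro ⟨⟨hsub, hcard, hS⟩, hn⟩
    refine ⟨S.erase n, ⟨fun i hi => ?_, by rw [card_erase_of_mem hn, hcard, Nat.add_sub_cancel],
      fun i hi h => hS i (mem_of_mem_erase hi) (mem_of_mem_erase h)⟩, insert_erase hn⟩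
    obtain ⟨hin, hiS⟩ := mem_erase.1 hi
    have := mem_Ico.1 (hsub hiS)
    have : i + 1 ≠ n := fun h => hS i hiS (h ▸ hn)
    rw [mem_Ico]
    omega
  · rintro ⟨T, ⟨hsub, hcard, hT⟩, rfl⟩
    have hlt : ∀ i ∈ T, 1 ≤ i ∧ i + 1 < n := fun i hi => by have := mem_Ico.1 (hsub hi); omega
    have hnT : n ∉ T := fun h => by have := hlt n h; omega
    refine ⟨⟨insert_subset (mem_Ico.2 ⟨hn, n.lt_succ_self⟩) fun i hi => ?_,
      by rw [card_insert_of_notMem hnT, hcard], ?_⟩, mem_insert_self n T⟩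
    · have := hlt i hi
      rw [mem_Ico]
      omega
    simp only [mem_insert]
    rintro i (rfl | hi) (h | h)
    · omega
    · have := hlt _ h; omega
    · have := hlt i hi; omega
    · exact hT i hi h

lemma filter_not_mem_noConsecutiveSubsets_Ico (n k : ℕ) :
    {S ∈ noConsecutiveSubsets (Ico 1 (n + 1)) k | n ∉ S} = noConsecutiveSubsets (Ico 1 n) k := by
  ext S
  simp only [mem_filter, mem_noConsecutiveSubsets]
  constructor
  · rintro ⟨⟨hsub, hcard, hS⟩, hn⟩
    refine ⟨fun i hi => ?_, hcard, hS⟩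
    have := mem_Ico.1 (hsub hi)
    have : i ≠ n := fun h => hn (h ▸ hi)
    rw [mem_Ico]
    omega
  · rintro ⟨hsub, hcard, hS⟩
    refine ⟨⟨hsub.trans (Ico_subset_Ico_right n.le_succ), hcard, hS⟩, fun h => ?_⟩
    simpa using hsub h

lemma card_filter_mem_noConsecutiveSubsets_Ico {n : ℕ} (hn : 0 < n) (k : ℕ) :
    #{S ∈ noConsecutiveSubsets (Ico 1 (n + 1)) (k + 1) | n ∈ S} =
      #(noConsecutiveSubsets (Ico 1 (n - 1)) k) := by
  rw [filter_mem_noConsecutiveSubsets_Ico hn, card_image_of_injOn]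
  intro S hS T hT h
  have hnS : n ∉ S := fun h => by
    have := mem_Ico.1 ((mem_noConsecutiveSubsets.1 hS).1 h); omega
  have hnT : n ∉ T := fun h => by
    have := mem_Ico.1 ((mem_noConsecutiveSubsets.1 hT).1 h); omega
  rw [← erase_insert hnS, ← erase_insert hnT]
  exact congrArg (·.erase n) h

theorem card_noConsecutiveSubsets_Ico_one :
    ∀ m k, #(noConsecutiveSubsets (Ico 1 m) k) = (m - k).choose k
  | _, 0 => by simp [noConsecutiveSubsets, filter_singleton]
  | 0, k + 1 | 1, k + 1 => by simp [noConsecutiveSubsets_empty]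
  | m + 2, k + 1 => by
    rw [← card_filter_add_card_filter_not (m + 1 ∈ ·),
      card_filter_mem_noConsecutiveSubsets_Ico (n := m + 1) (by omega), Nat.add_sub_cancel,
      filter_not_mem_noConsecutiveSubsets_Ico, card_noConsecutiveSubsets_Ico_one m k,
      card_noConsecutiveSubsets_Ico_one (m + 1) (k + 1), Nat.add_sub_add_right]
    rcases le_or_gt k m with hkm | hmk
    · rw [show m + 2 - (k + 1) = m - k + 1 by omega, Nat.choose_succ_succ]
    · simp [Nat.sub_eq_zero_of_le hmk.le, show m + 2 - (k + 1) = 0 by omega,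
        Nat.choose_eq_zero_of_lt (Nat.zero_lt_of_lt hmk)]

lemma mem_filter_mem_noConsecutiveSubsets_Ico {n k : ℕ} {S : Finset ℕ} :
    S ∈ {S ∈ noConsecutiveSubsets (Ico 1 (n + 1)) k | n ∈ S} ↔
      (∀ i ∈ S, 0 < i) ∧ (∀ i ∈ S, i + 1 ∉ S) ∧ S.card = k ∧ n ∈ S ∧ ∀ i ∈ S, i ≤ n := by
  simp only [mem_filter, mem_noConsecutiveSubsets, subset_iff, mem_Ico, Nat.lt_succ_iff,
    forall_and]
  tauto

theorem count_with_k_summands_general (n k : ℕ) (hn : 0 < n) :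
    {N : ℕ | F n ≤ N ∧ N < F (n + 1) ∧
        ∃ S : Finset ℕ, (∀ i ∈ S, 0 < i) ∧ (∀ i ∈ S, i + 1 ∉ S) ∧
          S.card = k + 1 ∧ N = ∑ i ∈ S, F i}.ncard
      = Nat.choose (n - 1 - k) k := by
  have hset : {N : ℕ | F n ≤ N ∧ N < F (n + 1) ∧
      ∃ S : Finset ℕ, (∀ i ∈ S, 0 < i) ∧ (∀ i ∈ S, i + 1 ∉ S) ∧
        S.card = k + 1 ∧ N = ∑ i ∈ S, F i} =
      {S ∈ noConsecutiveSubsets (Ico 1 (n + 1)) (k + 1) | n ∈ S}.image (∑ i ∈ ·, F i) := by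
    ext N
    simp only [Set.mem_ofPred_eq, coe_image, Set.mem_image, mem_coe,
      mem_filter_mem_noConsecutiveSubsets_Ico]
    constructor
    · rintro ⟨hlo, hhi, S, hpos, hS, hcard, rfl⟩
      exact ⟨S, ⟨hpos, hS, hcard,
        (sum_F_mem_Ico_iff hpos hS (card_pos.1 (by omega))).1 ⟨hlo, hhi⟩⟩, rfl⟩
    · rintro ⟨S, ⟨hpos, hS, hcard, htop⟩, rfl⟩
      obtain ⟨hlo, hhi⟩ := (sum_F_mem_Ico_iff hpos hS ⟨n, htop.1⟩).2 htop
      exact ⟨hlo, hhi, S, hpos, hS, hcard, rfl⟩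
  rw [hset, Set.ncard_coe_finset, card_image_of_injOn,
    card_filter_mem_noConsecutiveSubsets_Ico hn, card_noConsecutiveSubsets_Ico_one]
  exact sum_F_injOn.mono fun S hS =>
    (mem_filter_mem_noConsecutiveSubsets_Ico.1 hS).imp_right fun h => h.1

/-- The number of integers `N ∈ [F_n, F_{n+1})` admitting a representation as a
sum of `k+1` non-consecutive Fibonacci numbers is `C(n-1-k, k)`. -/
theorem count_with_k_summands (n k : ℕ) (hn : 0 < n) (hk : 2 * k ≤ n - 1) :
    {N : ℕ | F n ≤ N ∧ N < F (n + 1) ∧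
        ∃ S : Finset ℕ, (∀ i ∈ S, 0 < i) ∧ (∀ i ∈ S, i + 1 ∉ S) ∧
          S.card = k + 1 ∧ N = ∑ i ∈ S, F i}.ncard
      = Nat.choose (n - 1 - k) k :=
  count_with_k_summands_general n k hn
end

section
/- Define E(n) = ∑_{k=0}^{⌊(n-1)/2⌋} k·C(n-1-k, k). Then for every integer n ≥ 4, E(n) + E(n-2) = (n-2)·F_{n-3}. -/
/-!
Write `M m = ∑_{i+j=m} j * C(i, j)` for the `j`-weighted sum along the shallow diagonal of
Pascal's triangle whose unweighted sum is `fib (m + 1)`, so that `E n = M (n - 1)`. Pascal's rule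
`C(i+1, j+1) = C(i, j+1) + C(i, j)` splits `M (m + 2)` into `M (m + 1) + M m + fib (m + 1)`, the
extra Fibonacci term coming from the shift of the weight `j ↦ j + 1`. Adding two consecutive
instances of this recurrence and using `fib (m + 3) = fib (m + 1) + fib (m + 2)`, a two-step
induction gives `M (m + 2) + M m = (m + 1) * fib (m + 1)`.
-/

/-- `E n = ∑_{k=0}^{⌊(n-1)/2⌋} k * C(n-1-k, k)`. -/
def E (n : ℕ) : ℕ := ∑ k ∈ Finset.range ((n - 1) / 2 + 1), k * Nat.choose (n - 1 - k) k

open Finset Nat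

def shallowDiagMoment (m : ℕ) : ℕ := ∑ p ∈ antidiagonal m, p.2 * choose p.1 p.2

theorem E_eq_shallowDiagMoment (n : ℕ) : E n = shallowDiagMoment (n - 1) := by
  rw [shallowDiagMoment, ← Finset.Nat.sum_antidiagonal_swap]
  simp only [Prod.snd_swap, Prod.fst_swap]
  rw [Finset.Nat.sum_antidiagonal_eq_sum_range_succ (fun i j => i * choose j i), E]
  refine sum_subset (fun k hk => ?_) (fun k hk hk' => ?_)
  · simp only [mem_range] at *
    omega
  · simp only [mem_range] at hk hk'
    simp [choose_eq_zero_of_lt (show n - 1 - k < k by omega)]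

theorem shallowDiagMoment_add_one (m : ℕ) :
    shallowDiagMoment (m + 1) = ∑ p ∈ antidiagonal m, (p.2 + 1) * choose p.1 (p.2 + 1) := by
  simp [shallowDiagMoment, Finset.Nat.sum_antidiagonal_succ']

theorem shallowDiagMoment_add_two (m : ℕ) :
    shallowDiagMoment (m + 2) =
      shallowDiagMoment (m + 1) + shallowDiagMoment m + fib (m + 1) := by
  have hpascal : shallowDiagMoment (m + 2) = ∑ p ∈ antidiagonal m,
      ((p.2 + 1) * choose p.1 (p.2 + 1) + (p.2 * choose p.1 p.2 + choose p.1 p.2)) := by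
    rw [shallowDiagMoment_add_one, Finset.Nat.sum_antidiagonal_succ, choose_zero_succ, mul_zero,
      zero_add]
    refine sum_congr rfl fun p _ => ?_
    rw [choose_succ_succ]
    ring
  rw [hpascal, sum_add_distrib, sum_add_distrib, shallowDiagMoment_add_one, shallowDiagMoment,
    fib_succ_eq_sum_choose, add_assoc]

theorem shallowDiagMoment_add_two_add (m : ℕ) :
    shallowDiagMoment (m + 2) + shallowDiagMoment m = (m + 1) * fib (m + 1) := by
  induction m using Nat.twoStepInduction with
  | zero => decide
  | one => decide
  | more m ih ih' =>
    have h₁ := shallowDiagMoment_add_two (m + 2)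
    have h₂ := shallowDiagMoment_add_two m
    have h₃ := fib_add_two (n := m + 1)
    linear_combination h₁ + h₂ + ih + ih' - (m + 2) * h₃

theorem E_recurrence_general (n : ℕ) :
    E n + E (n - 2) = (n - 2) * Nat.fib (n - 2) := by
  rcases lt_or_ge n 3 with hn | hn
  · interval_cases n <;> rfl
  obtain ⟨m, rfl⟩ : ∃ m, n = m + 3 := ⟨n - 3, by omega⟩
  simpa [E_eq_shallowDiagMoment] using shallowDiagMoment_add_two_add m

/-- Recurrence for `E`: for `n ≥ 4`, `E(n) + E(n-2) = (n-2) * F_{n-3}`,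
where `F_{n-3} = fib (n-2)` in the standard convention. -/
theorem E_recurrence (n : ℕ) (hn : 4 ≤ n) :
    E n + E (n - 2) = (n - 2) * Nat.fib (n - 2) :=
  E_recurrence_general n
end

section
/- Define E(n) = ∑_{k=0}^{⌊(n-1)/2⌋} k·C(n-1-k, k) and let φ = (1+√5)/2. Then E(n) = n·F_{n-1}/(φ² + 1) + O(F_{n-2}); that is, there exists a constant c > 0 such that for all n ≥ 3, |E(n) - n·F_{n-1}/(φ² + 1)| ≤ c·F_{n-2}. -/
/-!
Pascal's rule `C(n+1-k, k+1) = C(n-k, k) + C(n-k, k+1)`, applied termwise together with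
`fib (n+1) = ∑ₖ C(n-k, k)`, gives the inhomogeneous recurrence
`E(n+3) = E(n+2) + E(n+1) + fib(n+1)`, whence the closed form
`5 E(n+1) = 2n fib(n+1) - (n+1) fib n`. Comparing it with `(n+1) fib(n+1) / (φ² + 1)` through
`ψ fib(n+1) + fib n = ψ^(n+1)` leaves the error `-((n+1) ψ^(n+1) + 2 fib(n+1)) / 5`, which is
`O(fib n)` because `|ψ| < 1` and `n ≤ fib n + 1`.
-/

open Real

open Finset goldenRatio

lemma sum_range_mul_choose_sub_congr (g : ℕ → ℕ) {n M M' : ℕ}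
    (hM : n / 2 < M) (hM' : n / 2 < M') :
    ∑ k ∈ range M, g k * (n - k).choose k = ∑ k ∈ range M', g k * (n - k).choose k := by
  have extend {M} (hM : n / 2 < M) :
      ∑ k ∈ range (n / 2 + 1), g k * (n - k).choose k =
        ∑ k ∈ range M, g k * (n - k).choose k := by
    refine sum_subset (range_subset_range.2 hM) fun k _ hk => ?_
    rw [mem_range] at hk
    rw [Nat.choose_eq_zero_of_lt (by omega), mul_zero]
  rw [← extend hM, extend hM']

lemma E_succ_eq_sum_range {n M : ℕ} (h : n / 2 < M) :
    E (n + 1) = ∑ k ∈ range M, k * (n - k).choose k :=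
  sum_range_mul_choose_sub_congr id (Nat.lt_succ_self _) h

lemma fib_succ_eq_sum_range_choose {n M : ℕ} (h : n / 2 < M) :
    Nat.fib (n + 1) = ∑ k ∈ range M, (n - k).choose k := by
  rw [Nat.fib_succ_eq_sum_choose, ← Nat.sum_antidiagonal_swap,
    Nat.sum_antidiagonal_eq_sum_range_succ_mk]
  simpa using sum_range_mul_choose_sub_congr (fun _ => 1) (by omega : n / 2 < n + 1) h

lemma E_add_two_eq_sum_range {n M : ℕ} (h : n / 2 < M) :
    E (n + 2) = ∑ j ∈ range M, (j + 1) * (n - j).choose (j + 1) := by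
  rw [E_succ_eq_sum_range (M := M + 1) (by omega), sum_range_succ']
  simp

lemma E_add_three (n : ℕ) : E (n + 3) = E (n + 2) + E (n + 1) + Nat.fib (n + 1) := by
  rw [E_add_two_eq_sum_range (M := n + 1) (by omega),
    E_add_two_eq_sum_range (M := n + 1) (by omega),
    E_succ_eq_sum_range (M := n + 1) (by omega),
    fib_succ_eq_sum_range_choose (M := n + 1) (by omega), ← sum_add_distrib, ← sum_add_distrib]
  refine sum_congr rfl fun j hj => ?_
  rw [mem_range] at hj
  rw [show n + 1 - j = n - j + 1 by omega, Nat.choose_succ_succ']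
  ring

lemma five_mul_E_succ_add_mul_fib (n : ℕ) :
    5 * E (n + 1) + (n + 1) * Nat.fib n = 2 * n * Nat.fib (n + 1) := by
  induction n using Nat.twoStepInduction with
  | zero => rfl
  | one => rfl
  | more n ih₀ ih₁ =>
    have hE := E_add_three n
    have hF₁ := Nat.fib_add_two (n := n)
    have hF₂ := Nat.fib_add_two (n := n + 1)
    zify at *
    linear_combination
      5 * hE + ih₀ + ih₁ - (2 * (n : ℤ) + 4) * hF₂ + ((n : ℤ) + 1) * hF₁

lemma E_succ_sub_eq (n : ℕ) :
    (E (n + 1) : ℝ) - (n + 1) * Nat.fib (n + 1) / (φ ^ 2 + 1) =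
      -((n + 1) * ψ ^ (n + 1) + 2 * Nat.fib (n + 1)) / 5 := by
  have hE : (5 * E (n + 1) + (n + 1) * Nat.fib n : ℝ) = 2 * n * Nat.fib (n + 1) := by
    exact_mod_cast five_mul_E_succ_add_mul_fib n
  have h5 : √5 ^ 2 = 5 := sq_sqrt (by norm_num)
  rw [← goldenConj_mul_fib_succ_add_fib, goldenRatio_sq]
  have hden : φ + 1 + 1 ≠ 0 := by positivity
  field_simp
  linear_combination (10 + 2 * √5) * hE - (n + 1) * Nat.fib (n + 1) * h5

lemma abs_E_succ_sub_le {n : ℕ} (hn : 1 ≤ n) :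
    |(E (n + 1) : ℝ) - (n + 1) * Nat.fib (n + 1) / (φ ^ 2 + 1)| ≤ 2 * (Nat.fib n : ℝ) := by
  have hψ : |ψ| ^ (n + 1) ≤ 1 := pow_le_one₀ (abs_nonneg _)
    (abs_le.2 ⟨neg_one_lt_goldenConj.le, goldenConj_neg.le.trans zero_le_one⟩)
  have hn_le : (n : ℝ) ≤ Nat.fib n + 1 := by exact_mod_cast Nat.le_fib_add_one n
  have hfib_le : (Nat.fib (n + 1) : ℝ) ≤ 2 * Nat.fib n := by
    have := Nat.fib_mono (n.sub_le 1)
    rw [Nat.fib_add_one (by omega)]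
    exact_mod_cast (by omega : Nat.fib (n - 1) + Nat.fib n ≤ 2 * Nat.fib n)
  have hfib_pos : (1 : ℝ) ≤ Nat.fib n := by exact_mod_cast Nat.fib_pos.2 hn
  rw [E_succ_sub_eq, abs_div, abs_neg, abs_of_pos (by norm_num : (0 : ℝ) < 5)]
  calc |(n + 1) * ψ ^ (n + 1) + 2 * Nat.fib (n + 1)| / 5
      ≤ ((n + 1) * |ψ| ^ (n + 1) + 2 * Nat.fib (n + 1)) / 5 := by
        gcongr
        refine (abs_add_le _ _).trans_eq ?_
        rw [abs_mul, abs_pow, abs_of_nonneg (by positivity : (0 : ℝ) ≤ n + 1),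
          abs_of_nonneg (by positivity : (0 : ℝ) ≤ 2 * Nat.fib (n + 1))]
    _ ≤ 2 * Nat.fib n := by nlinarith

/-- `E(n) = n·F_{n-1}/(φ²+1) + O(F_{n-2})`, where `φ = (1+√5)/2`,
`F_{n-1} = fib n` and `F_{n-2} = fib (n-1)` in the standard convention. -/
theorem E_asymptotic :
    ∃ c : ℝ, 0 < c ∧ ∀ n : ℕ, 3 ≤ n →
      |(E n : ℝ) - (n : ℝ) * (Nat.fib n : ℝ) / (((1 + Real.sqrt 5) / 2) ^ 2 + 1)|
        ≤ c * (Nat.fib (n - 1) : ℝ) := by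
  refine ⟨2, two_pos, fun n hn => ?_⟩
  obtain ⟨m, rfl⟩ : ∃ m, n = m + 1 := ⟨n - 1, by omega⟩
  simpa using abs_E_succ_sub_le (n := m) (by omega)
end

section
/- Let μ_n = (1/F_{n-1})·∑_{k=0}^{⌊(n-1)/2⌋} (k+1)·C(n-1-k, k) and let σ_n² = (1/F_{n-1})·∑_{k=0}^{⌊(n-1)/2⌋} (k+1)²·C(n-1-k, k) - μ_n² be the variance of the number of summands in the Zeckendorf decompositions of integers in [F_n, F_{n+1}). Then, as n → ∞, σ_n² - n/(5√5) converges to -2/25. -/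
/-!
With `m = n - 1`, the weighted sums `S_w(m) = ∑ₖ w(k) C(m-k, k)` satisfy the Pascal-type recurrence
`S_w(m+2) = S_w(m+1) + S_{w(·+1)}(m)`, which gives exact closed forms for the weights `1`, `k+1`
and `(k+1)²` as combinations of `fib m` and `fib (m+1)`. Hence `μ` and `σ²` are explicit in `m`
and `r = fib m / fib (m+1)`, and `σ² - n/(5√5) + 2/25` is `(r + ψ)` times a quadratic in `m`.
Binet's formula gives `r + ψ = ψ^(m+1) / fib (m+1)`, so this error decays like `m² |ψ|^m`.
-/

open Filter

/-- `μ n` is the mean number of summands in Zeckendorf decompositions of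
integers in `[F_n, F_{n+1})`; here `F_{n-1} = fib n` in the standard convention. -/
noncomputable def zeckMean (n : ℕ) : ℝ :=
  (∑ k ∈ Finset.range ((n - 1) / 2 + 1),
      ((k : ℝ) + 1) * (Nat.choose (n - 1 - k) k : ℝ)) / (Nat.fib n : ℝ)

/-- `σ² n` is the variance of the number of summands in Zeckendorf
decompositions of integers in `[F_n, F_{n+1})`. -/
noncomputable def zeckVar (n : ℕ) : ℝ :=
  (∑ k ∈ Finset.range ((n - 1) / 2 + 1),
      ((k : ℝ) + 1) ^ 2 * (Nat.choose (n - 1 - k) k : ℝ)) / (Nat.fib n : ℝ)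
    - (zeckMean n) ^ 2

open Finset Nat Real
open scoped goldenRatio

lemma cast_fib_add_two (n : ℕ) : (fib (n + 2) : ℝ) = fib n + fib (n + 1) := by
  exact_mod_cast fib_add_two

noncomputable def diagChooseSum (w : ℕ → ℝ) (m : ℕ) : ℝ :=
  ∑ k ∈ range (m + 1), w k * (m - k).choose k

lemma sum_range_half_eq_diagChooseSum (w : ℕ → ℝ) (m : ℕ) :
    ∑ k ∈ range (m / 2 + 1), w k * ((m - k).choose k : ℝ) = diagChooseSum w m := by
  refine sum_subset (range_subset_range.2 (by omega)) fun k hk hk' => ?_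
  rw [mem_range] at hk hk'
  simp [choose_eq_zero_of_lt (show m - k < k by omega)]

lemma diagChooseSum_add (w v : ℕ → ℝ) (m : ℕ) :
    diagChooseSum (fun k => w k + v k) m = diagChooseSum w m + diagChooseSum v m := by
  simp only [diagChooseSum, add_mul, sum_add_distrib]

lemma diagChooseSum_const_mul (c : ℝ) (w : ℕ → ℝ) (m : ℕ) :
    diagChooseSum (fun k => c * w k) m = c * diagChooseSum w m := by
  simp only [diagChooseSum, mul_sum, mul_assoc]

lemma diagChooseSum_add_two (w : ℕ → ℝ) (m : ℕ) :
    diagChooseSum w (m + 2) = diagChooseSum w (m + 1) + diagChooseSum (fun k => w (k + 1)) m := by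
  have pascal : ∀ k ∈ range (m + 1), w (k + 1) * ((m + 2 - (k + 1)).choose (k + 1) : ℝ)
      = w (k + 1) * ((m - k).choose k) + w (k + 1) * ((m + 1 - (k + 1)).choose (k + 1)) := by
    intro k hk
    rw [mem_range] at hk
    rw [show m + 2 - (k + 1) = m - k + 1 by omega, show m + 1 - (k + 1) = m - k by omega,
      choose_succ_succ, Nat.cast_add, mul_add]
  rw [diagChooseSum, diagChooseSum, diagChooseSum,
    sum_range_succ' (fun k => w k * ((m + 2 - k).choose k : ℝ)),
    sum_range_succ' (fun k => w k * ((m + 1 - k).choose k : ℝ)),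
    sum_range_succ, sum_congr rfl pascal, sum_add_distrib]
  simp [choose_eq_zero_of_lt]
  ring

lemma diagChooseSum_one (m : ℕ) : diagChooseSum (fun _ => 1) m = fib (m + 1) := by
  induction m using Nat.twoStepInduction with
  | zero => simp [diagChooseSum]
  | one => simp [diagChooseSum, sum_range_succ]
  | more m ih₀ ih₁ =>
    rw [diagChooseSum_add_two, ih₀, ih₁, cast_fib_add_two (m + 1)]
    ring

lemma five_mul_diagChooseSum_succ (m : ℕ) :
    5 * diagChooseSum (fun k => k + 1) m = (2 * m + 5) * fib (m + 1) - (m + 1) * fib m := by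
  induction m using Nat.twoStepInduction with
  | zero => norm_num [diagChooseSum]
  | one => norm_num [diagChooseSum, sum_range_succ]
  | more m ih₀ ih₁ =>
    have shift : diagChooseSum (fun k ↦ ((k + 1 : ℕ) : ℝ) + 1) m
        = diagChooseSum (fun k ↦ k + 1) m + diagChooseSum (fun _ ↦ 1) m := by
      rw [← diagChooseSum_add]; push_cast; rfl
    rw [diagChooseSum_add_two, shift, diagChooseSum_one, cast_fib_add_two (m + 1)]
    push_cast at ih₁ ⊢
    linear_combination ih₀ + ih₁ + (m + 1) * cast_fib_add_two m

lemma twentyFive_mul_diagChooseSum_succ_sq (m : ℕ) :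
    25 * diagChooseSum (fun k => (k + 1) ^ 2) m
      = (5 * m ^ 2 + 23 * m + 25) * fib (m + 1) - (5 * m ^ 2 + 14 * m + 9) * fib m := by
  induction m using Nat.twoStepInduction with
  | zero => norm_num [diagChooseSum]
  | one => norm_num [diagChooseSum, sum_range_succ]
  | more m ih₀ ih₁ =>
    have shift : diagChooseSum (fun k ↦ (((k + 1 : ℕ) : ℝ) + 1) ^ 2) m
        = diagChooseSum (fun k ↦ (k + 1) ^ 2) m + 2 * diagChooseSum (fun k ↦ k + 1) m
          + diagChooseSum (fun _ ↦ 1) m := by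
      rw [← diagChooseSum_const_mul, ← diagChooseSum_add, ← diagChooseSum_add]
      push_cast; ring_nf
    rw [diagChooseSum_add_two, shift, diagChooseSum_one, cast_fib_add_two (m + 1)]
    push_cast at ih₁ ⊢
    linear_combination ih₀ + ih₁ + 10 * five_mul_diagChooseSum_succ m
      + (5 * m ^ 2 + 24 * m + 19) * cast_fib_add_two m

noncomputable def fibRatio (m : ℕ) : ℝ := fib m / fib (m + 1)

lemma cast_fib_succ_pos (m : ℕ) : (0 : ℝ) < fib (m + 1) := by
  exact_mod_cast fib_pos.2 m.succ_pos

lemma fibRatio_nonneg (m : ℕ) : 0 ≤ fibRatio m := by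
  unfold fibRatio; positivity

lemma fibRatio_le_one (m : ℕ) : fibRatio m ≤ 1 := by
  rw [fibRatio, div_le_one (cast_fib_succ_pos m)]
  exact_mod_cast fib_le_fib_succ

lemma abs_fibRatio_add_goldenConj_le (m : ℕ) : |fibRatio m + ψ| ≤ |ψ| ^ (m + 1) := by
  have hF := cast_fib_succ_pos m
  have h : fibRatio m + ψ = ψ ^ (m + 1) / fib (m + 1) := by
    rw [fibRatio, ← goldenConj_mul_fib_succ_add_fib]
    field_simp
    ring
  rw [h, abs_div, abs_pow, abs_of_pos hF]
  exact div_le_self (by positivity) (by exact_mod_cast fib_pos.2 m.succ_pos)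

lemma zeckMean_succ (m : ℕ) : zeckMean (m + 1) = (2 * m + 5 - (m + 1) * fibRatio m) / 5 := by
  rw [zeckMean, Nat.add_sub_cancel, sum_range_half_eq_diagChooseSum (fun k => (k : ℝ) + 1),
    fibRatio]
  have := cast_fib_succ_pos m
  field_simp
  linear_combination five_mul_diagChooseSum_succ m

lemma zeckVar_succ (m : ℕ) : zeckVar (m + 1)
    = (5 * m ^ 2 + 23 * m + 25 - (5 * m ^ 2 + 14 * m + 9) * fibRatio m) / 25
      - zeckMean (m + 1) ^ 2 := by
  rw [zeckVar, Nat.add_sub_cancel, sum_range_half_eq_diagChooseSum (fun k => ((k : ℝ) + 1) ^ 2),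
    fibRatio]
  have := cast_fib_succ_pos m
  field_simp
  linear_combination twentyFive_mul_diagChooseSum_succ_sq m

lemma zeckVar_succ_sub (m : ℕ) : zeckVar (m + 1) - (m + 1) / (5 * √5)
    = -2 / 25 + (fibRatio m + ψ) * (1 - m ^ 2 - (m + 1) ^ 2 * (fibRatio m - ψ)) / 25 := by
  have h5 : √5 ^ 2 = 5 := sq_sqrt (by norm_num)
  have hdiv : (m + 1) / (5 * √5) = (m + 1) * √5 / 25 := by
    rw [div_eq_div_iff (by positivity) (by norm_num)]
    linear_combination -5 * (m + 1) * h5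
  rw [zeckVar_succ, zeckMean_succ, hdiv, goldenConj]
  linear_combination (-(m + 1) ^ 2 / 100) * h5

lemma abs_goldenConj_lt_one : |ψ| < 1 :=
  abs_lt.2 ⟨neg_one_lt_goldenConj, goldenConj_neg.trans one_pos⟩

lemma tendsto_zeckVar_error :
    Tendsto (fun m : ℕ => (fibRatio m + ψ) * (1 - (m : ℝ) ^ 2 - (m + 1) ^ 2 * (fibRatio m - ψ)))
      atTop (nhds 0) := by
  have hpoly : ∀ m : ℕ,
      |1 - (m : ℝ) ^ 2 - (m + 1) ^ 2 * (fibRatio m - ψ)| ≤ 3 * ((m : ℝ) + 1) ^ 2 := by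
    intro m
    have ht₀ : 0 ≤ fibRatio m - ψ := by linarith [fibRatio_nonneg m, goldenConj_neg]
    have ht₂ : fibRatio m - ψ ≤ 2 := by linarith [fibRatio_le_one m, neg_one_lt_goldenConj]
    have hsq := sq_nonneg ((m : ℝ) + 1)
    have := mul_nonneg hsq ht₀
    have := mul_le_mul_of_nonneg_left ht₂ hsq
    rw [abs_le]
    constructor <;> nlinarith [m.cast_nonneg (α := ℝ)]
  have hgeom :
      Tendsto (fun m : ℕ => 3 * (((m + 1 : ℕ) : ℝ) ^ 2 * |ψ| ^ (m + 1))) atTop (nhds 0) := by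
    simpa using ((tendsto_add_atTop_iff_nat 1).2 (tendsto_pow_const_mul_const_pow_of_lt_one 2
      (abs_nonneg ψ) abs_goldenConj_lt_one)).const_mul 3
  refine squeeze_zero_norm (fun m => ?_) hgeom
  rw [norm_mul, norm_eq_abs, norm_eq_abs, Nat.cast_succ]
  calc _ ≤ |ψ| ^ (m + 1) * (3 * (m + 1) ^ 2) :=
        mul_le_mul (abs_fibRatio_add_goldenConj_le m) (hpoly m) (abs_nonneg _) (by positivity)
    _ = _ := by ring

/-- The variance of the number of Zeckendorf summands satisfies
`σ_n² - n/(5√5) → -2/25` as `n → ∞`. -/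
theorem zeckendorf_variance :
    Tendsto (fun n : ℕ => zeckVar n - (n : ℝ) / (5 * Real.sqrt 5))
      atTop (nhds (-2 / 25)) := by
  rw [← tendsto_add_atTop_iff_nat 1]
  have h := (tendsto_zeckVar_error.div_const 25).const_add (-2 / 25)
  rw [zero_div, add_zero] at h
  refine h.congr fun m => ?_
  rw [Nat.cast_succ, zeckVar_succ_sub, mul_div_assoc]
end

section
/- Let φ = (1+√5)/2, c(m) = m/(φ+2), s(m) = √(φ·m/(5(φ+2))). Fix a real number x, and for each n let k_n = ⌊c(n) + x·s(n)⌋. Then, as n → ∞, the quantity s(n+1)·(√5/φ)·√((n - k_n)/(k_n·(n - 2k_n))) converges to 1. (Equivalently, the prefactor N_n(k) = (1/√(2π))·√((n-k)/(k(n-2k)))·(√5/φ) from Stirling's formula, evaluated at k = k_n, satisfies N_n(k_n)·√(2π·s(n+1)²) → 1.) -/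
/-!
Since `s(n) = O(√n)`, the ratio `k_n / n` tends to `c = 1/(φ+2)`. The square of the quantity
equals `(1 + 1/n) · F(k_n / n)` with `F r = (1 - r) / (φ(φ+2) r (1 - 2r))`, which is continuous
at `c`, and `F c = (φ + 1) / φ² = 1`.
-/

open Filter

/-- The golden mean `φ = (1+√5)/2`. -/
noncomputable def phi : ℝ := (1 + Real.sqrt 5) / 2

/-- Leading-order mean `c(m) = m/(φ+2)` of the number of non-forced Zeckendorf
summands on `[F_m, F_{m+1})`. -/
noncomputable def cLead (m : ℕ) : ℝ := (m : ℝ) / (phi + 2)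

/-- Leading-order standard deviation `s(m) = √(φ·m/(5(φ+2)))`. -/
noncomputable def sLead (m : ℕ) : ℝ := Real.sqrt (phi * (m : ℝ) / (5 * (phi + 2)))

open Topology

lemma phi_pos : 0 < phi := Real.goldenRatio_pos

lemma phi_add_two_pos : 0 < phi + 2 := by linarith [phi_pos]

lemma tendsto_natFloor_div_of_tendsto_div {f : ℕ → ℝ} {c : ℝ} (hc : 0 < c)
    (hf : Tendsto (fun n => f n / n) atTop (𝓝 c)) :
    Tendsto (fun n => (⌊f n⌋₊ : ℝ) / n) atTop (𝓝 c) := by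
  have hf_top : Tendsto f atTop atTop := by
    refine (hf.pos_mul_atTop hc tendsto_natCast_atTop_atTop).congr' ?_
    filter_upwards [eventually_ne_atTop 0] with n hn
    exact div_mul_cancel₀ _ (Nat.cast_ne_zero.mpr hn)
  have h := (tendsto_nat_floor_div_atTop.comp hf_top).mul hf
  rw [one_mul] at h
  refine h.congr' ?_
  filter_upwards [hf_top.eventually_ne_atTop 0] with n hn
  exact div_mul_div_cancel₀ hn

lemma tendsto_sLead_div_atTop : Tendsto (fun n : ℕ => sLead n / n) atTop (𝓝 0) := by
  have h := (tendsto_const_div_atTop_nhds_zero_nat (phi / (5 * (phi + 2)))).sqrt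
  rw [Real.sqrt_zero] at h
  refine h.congr' ?_
  filter_upwards [eventually_gt_atTop 0] with n hn
  have hn_pos : (0 : ℝ) < n := Nat.cast_pos.mpr hn
  conv_rhs => rw [← Real.sqrt_sq hn_pos.le, sLead, ← Real.sqrt_div' _ (sq_nonneg _)]
  congr 1
  field_simp

lemma tendsto_cLead_add_mul_sLead_div (x : ℝ) :
    Tendsto (fun n : ℕ => (cLead n + x * sLead n) / n) atTop (𝓝 (phi + 2)⁻¹) := by
  have h := (tendsto_sLead_div_atTop.const_mul x).const_add (phi + 2)⁻¹
  rw [mul_zero, add_zero] at h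
  refine h.congr' ?_
  filter_upwards [eventually_ne_atTop 0] with n hn
  rw [cLead, add_div, mul_div_assoc, div_div_cancel_left' (Nat.cast_ne_zero.mpr hn)]

lemma sLead_mul_sqrt_five_div_phi (m : ℕ) :
    sLead m * (Real.sqrt 5 / phi) = Real.sqrt (m / (phi * (phi + 2))) := by
  have hphi := phi_pos
  have h5 : Real.sqrt 5 / phi = Real.sqrt (5 / phi ^ 2) := by
    rw [Real.sqrt_div' 5 (sq_nonneg phi), Real.sqrt_sq hphi.le]
  rw [sLead, h5, ← Real.sqrt_mul (by have hphi2 := phi_add_two_pos; positivity)]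
  congr 1
  field_simp

noncomputable def stirlingRatio (r : ℝ) : ℝ := (1 - r) / (phi * (phi + 2) * (r * (1 - 2 * r)))

lemma stirlingRatio_denom_ne_zero :
    phi * (phi + 2) * ((phi + 2)⁻¹ * (1 - 2 * (phi + 2)⁻¹)) ≠ 0 := by
  have hphi := phi_pos
  have hphi2 := phi_add_two_pos
  have h : 1 - 2 * (phi + 2)⁻¹ = phi / (phi + 2) := by field_simp; ring
  rw [h]
  positivity

lemma stirlingRatio_inv_phi_add_two : stirlingRatio (phi + 2)⁻¹ = 1 := by
  have hphi2 := phi_add_two_pos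
  have hsq : phi ^ 2 = phi + 1 := Real.goldenRatio_sq
  rw [stirlingRatio, div_eq_one_iff_eq stirlingRatio_denom_ne_zero]
  field_simp
  linear_combination (-1) * hsq

lemma continuousAt_stirlingRatio : ContinuousAt stirlingRatio (phi + 2)⁻¹ :=
  ContinuousAt.div (by fun_prop) (by fun_prop) stirlingRatio_denom_ne_zero

lemma mul_div_eq_one_add_inv_mul_stirlingRatio {n : ℝ} (hn : n ≠ 0) (k : ℝ) :
    (n + 1) / (phi * (phi + 2)) * ((n - k) / (k * (n - 2 * k))) =
      (1 + n⁻¹) * stirlingRatio (k / n) := by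
  rw [stirlingRatio]
  field_simp

/-- Analysis of the Stirling prefactor `N_n(k)`: with `k_n = ⌊c(n) + x·s(n)⌋`,
the quantity `s(n+1)·(√5/φ)·√((n-k_n)/(k_n(n-2k_n)))` tends to `1`, i.e.
`N_n(k_n)·√(2π·s(n+1)²) → 1`. -/
theorem prefactor_limit (x : ℝ) :
    Tendsto (fun n : ℕ =>
        sLead (n + 1) * (Real.sqrt 5 / phi) *
          Real.sqrt (((n : ℝ) - (⌊cLead n + x * sLead n⌋₊ : ℝ)) /
            ((⌊cLead n + x * sLead n⌋₊ : ℝ) *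
              ((n : ℝ) - 2 * (⌊cLead n + x * sLead n⌋₊ : ℝ)))))
      atTop (nhds 1) := by
  have hratio : Tendsto (fun n : ℕ => (⌊cLead n + x * sLead n⌋₊ : ℝ) / n) atTop
      (𝓝 (phi + 2)⁻¹) :=
    tendsto_natFloor_div_of_tendsto_div (inv_pos.mpr phi_add_two_pos)
      (tendsto_cLead_add_mul_sLead_div x)
  have hstirling := continuousAt_stirlingRatio.tendsto.comp hratio
  rw [stirlingRatio_inv_phi_add_two] at hstirling
  have hsq := ((tendsto_inv_atTop_zero.comp tendsto_natCast_atTop_atTop).const_add 1).mul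
    hstirling
  rw [add_zero, one_mul] at hsq
  have h := hsq.sqrt
  rw [Real.sqrt_one] at h
  refine h.congr' ?_
  filter_upwards [eventually_ne_atTop 0] with n hn
  have hnonneg : (0 : ℝ) ≤ ((n + 1 : ℕ) : ℝ) / (phi * (phi + 2)) :=
    div_nonneg (Nat.cast_nonneg _) (mul_pos phi_pos phi_add_two_pos).le
  rw [sLead_mul_sqrt_five_div_phi, ← Real.sqrt_mul hnonneg, Nat.cast_add_one,
    mul_div_eq_one_add_inv_mul_stirlingRatio (Nat.cast_ne_zero.mpr hn)]
  rfl
end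

section
/- Let S_n = F_n + F_{n-4} + F_{n-8} + ⋯ (the sum of F_{n-4i} over all i ≥ 0 with n - 4i ≥ 1) for n ≥ 1, and S_0 = 0. If n ≥ 1 and N is an integer with S_{n-1} < N ≤ S_n, then in any far-difference representation (P, Q) of N, the index n belongs to P, n is the largest element of P, and every element of Q is less than n. (That is, the leading term of the far-difference representation of every N in (S_{n-1}, S_n] is +F_n.) -/
/-- `S n = F_n + F_{n-4} + F_{n-8} + ⋯` (sum over `i ≥ 0` with `n - 4i ≥ 1`),
with `S 0 = 0`. -/
def S (n : ℕ) : ℕ := ∑ i ∈ Finset.range ((n + 3) / 4), F (n - 4 * i)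

/-- `(P, Q)` is a far-difference representation of the integer `N`. -/
def IsFarDifference (N : ℤ) (P Q : Finset ℕ) : Prop :=
  (∀ i ∈ P, 0 < i) ∧ (∀ j ∈ Q, 0 < j) ∧
  (∀ i ∈ P, ∀ j ∈ P, i < j → i + 4 ≤ j) ∧
  (∀ i ∈ Q, ∀ j ∈ Q, i < j → i + 4 ≤ j) ∧
  (∀ i ∈ P, ∀ j ∈ Q, i + 3 ≤ j ∨ j + 3 ≤ i) ∧
  N = (∑ i ∈ P, (F i : ℤ)) - ∑ j ∈ Q, (F j : ℤ)

lemma F_add_two (n : ℕ) : F (n + 2) = F n + F (n + 1) := by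
  show Nat.fib (n + 2 + 1) = Nat.fib (n + 1) + Nat.fib (n + 1 + 1)
  rw [show n + 2 + 1 = (n + 1) + 2 by ring, Nat.fib_add_two]

lemma S_succ (n : ℕ) : S (n + 1) = F (n + 1) + S (n - 3) := by
  unfold S
  rw [show (n + 1 + 3) / 4 = n / 4 + 1 from by omega, Finset.sum_range_succ',
    show (n - 3 + 3) / 4 = n / 4 from by omega]
  rw [add_comm]
  have e1 : F (n + 1 - 4 * 0) = F (n + 1) := by norm_num
  rw [e1]
  congr 1
  apply Finset.sum_congr rfl
  intro i _
  congr 1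
  omega

lemma S_eq (n : ℕ) (hn : 1 ≤ n) : S n = F n + S (n - 4) := by
  obtain ⟨m, rfl⟩ : ∃ m, n = m + 1 := ⟨n - 1, by omega⟩
  rw [S_succ, show m + 1 - 4 = m - 3 from by omega]

lemma S_le_succ : ∀ n, S n ≤ S (n + 1) := by
  intro n
  induction n using Nat.strong_induction_on with
  | _ n ih =>
    rcases Nat.eq_zero_or_pos n with rfl | hn
    · decide
    rw [S_succ, S_eq n hn]
    have h1 : F n ≤ F (n + 1) := F_mono (by omega)
    have h2 : S (n - 4) ≤ S (n - 3) := by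
      rcases Nat.lt_or_ge n 4 with h | h
      · rw [show n - 4 = n - 3 from by omega]
      · rw [show n - 3 = (n - 4) + 1 from by omega]
        exact ih (n - 4) (by omega)
    omega

lemma S_mono : Monotone S := monotone_nat_of_le_succ S_le_succ

lemma S_S_F : ∀ n, 1 ≤ n → S (n - 1) + S (n - 3) + 1 = F n := by
  intro n
  induction n using Nat.strong_induction_on with
  | _ n ih =>
    intro hn
    rcases Nat.lt_or_ge n 5 with h | h
    · interval_cases n <;> decide
    obtain ⟨k, rfl⟩ : ∃ k, n = k + 5 := ⟨n - 5, by omega⟩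
    have h1 : S (k + 4) = F (k + 4) + S k := by
      have := S_succ (k + 3)
      simpa using this
    have h2 : S (k + 2) = F (k + 2) + S (k - 2) := by
      have := S_succ (k + 1)
      simpa [show k + 1 - 3 = k - 2 from by omega] using this
    have h3 : S k + S (k - 2) + 1 = F (k + 1) := by
      have := ih (k + 1) (by omega) (by omega)
      simpa using this
    have h4 : F (k + 5) = F (k + 3) + F (k + 4) := F_add_two (k + 3)
    have h5 : F (k + 3) = F (k + 1) + F (k + 2) := F_add_two (k + 1)
    simp only [show k + 5 - 1 = k + 4 from by omega, show k + 5 - 3 = k + 2 from by omega]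
    omega

lemma sum_le_S : ∀ m (A : Finset ℕ), (∀ i ∈ A, 0 < i) →
    (∀ i ∈ A, ∀ j ∈ A, i < j → i + 4 ≤ j) → (∀ i ∈ A, i ≤ m) →
    ∑ i ∈ A, F i ≤ S m := by
  intro m
  induction m using Nat.strong_induction_on with
  | _ m ih =>
    intro A hpos hgap hle
    rcases A.eq_empty_or_nonempty with rfl | hne
    · simp
    set a := A.max' hne with ha
    have ham : a ∈ A := A.max'_mem hne
    have ham' : a ≤ m := hle a ham
    have hapos : 0 < a := hpos a ham
    have hmpos : 0 < m := lt_of_lt_of_le hapos ham'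
    have key : ∀ i ∈ A.erase a, i ≤ a - 4 := by
      intro i hi
      have hiA := Finset.mem_of_mem_erase hi
      have hne' := Finset.ne_of_mem_erase hi
      have hlt : i < a := lt_of_le_of_ne (A.le_max' i hiA) hne'
      have := hgap i hiA a ham hlt
      omega
    have h1 : ∑ i ∈ A.erase a, F i ≤ S (a - 4) :=
      ih (a - 4) (by omega) _ (fun i hi => hpos i (Finset.mem_of_mem_erase hi))
        (fun i hi j hj => hgap i (Finset.mem_of_mem_erase hi) j (Finset.mem_of_mem_erase hj))
        key
    have h2 : ∑ i ∈ A, F i = F a + ∑ i ∈ A.erase a, F i :=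
      (Finset.add_sum_erase A F ham).symm
    have h3 : S a = F a + S (a - 4) := S_eq a hapos
    have h4 : S a ≤ S m := S_mono ham'
    omega

/-- For `N ∈ (S_{n-1}, S_n]`, the leading term of any far-difference
representation of `N` is `+F_n`: `n ∈ P`, `n` is the largest element of `P`,
and every element of `Q` is smaller than `n`. -/
theorem far_difference_leading_term (n : ℕ) (hn : 1 ≤ n) (N : ℕ)
    (hlow : S (n - 1) < N) (hhigh : N ≤ S n)
    (P Q : Finset ℕ) (h : IsFarDifference (N : ℤ) P Q) :
    n ∈ P ∧ (∀ i ∈ P, i ≤ n) ∧ (∀ j ∈ Q, j < n) := by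
  obtain ⟨hP, hQ, hPP, hQQ, hPQ, hN⟩ := h
  have hN1 : 1 ≤ N := by omega
  have hne : (P ∪ Q).Nonempty := by
    by_contra hc
    rw [Finset.not_nonempty_iff_eq_empty, Finset.union_eq_empty] at hc
    obtain ⟨rfl, rfl⟩ := hc
    simp at hN
    omega
  set m := (P ∪ Q).max' hne with hm
  have hmem := (P ∪ Q).max'_mem hne
  have hle : ∀ i ∈ P ∪ Q, i ≤ m := fun i hi => (P ∪ Q).le_max' i hi
  rw [Finset.mem_union] at hmem
  have hmpos : 0 < m := by rcases hmem with h' | h'; exacts [hP m h', hQ m h']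
  have hid : S (m - 1) + S (m - 3) + 1 = F m := S_S_F m hmpos
  have hNcast : (N : ℤ) = ((∑ i ∈ P, F i : ℕ) : ℤ) - ((∑ j ∈ Q, F j : ℕ) : ℤ) := by
    push_cast
    exact hN
  rcases hmem with hmP | hmQ
  · have hQle : ∀ j ∈ Q, j ≤ m - 3 := by
      intro j hj
      have h1 := hle j (Finset.mem_union_right _ hj)
      rcases hPQ m hmP j hj with h2 | h2 <;> omega
    have hb : ∑ j ∈ Q, F j ≤ S (m - 3) := sum_le_S _ Q hQ hQQ hQle
    have ha1 : F m ≤ ∑ i ∈ P, F i :=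
      Finset.single_le_sum (fun i _ => Nat.zero_le _) hmP
    have ha2 : ∑ i ∈ P, F i ≤ S m :=
      sum_le_S m P hP hPP (fun i hi => hle i (Finset.mem_union_left _ hi))
    have hlow' : S (m - 1) < N := by omega
    have hhigh' : N ≤ S m := by omega
    have hmn1 : m ≤ n := by
      by_contra hc
      have : S n ≤ S (m - 1) := S_mono (by omega)
      omega
    have hmn2 : n ≤ m := by
      by_contra hc
      have : S m ≤ S (n - 1) := S_mono (by omega)
      omega
    have hmn : m = n := le_antisymm hmn1 hmn2
    refine ⟨hmn ▸ hmP, fun i hi => ?_, fun j hj => ?_⟩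
    · have := hle i (Finset.mem_union_left _ hi); omega
    · have := hQle j hj; omega
  · exfalso
    have hPle : ∀ i ∈ P, i ≤ m - 3 := by
      intro i hi
      have h1 := hle i (Finset.mem_union_left _ hi)
      rcases hPQ i hi m hmQ with h2 | h2 <;> omega
    have ha : ∑ i ∈ P, F i ≤ S (m - 3) := sum_le_S _ P hP hPP hPle
    have hb : F m ≤ ∑ j ∈ Q, F j :=
      Finset.single_le_sum (fun i _ => Nat.zero_le _) hmQ
    omega
end
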